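/- arXiv:1205.6123 — 3 statements merged into one kernel-verified Lean document; each statement's English description precedes it below -/
import Mathlib

section
/- The Cartesian product of two interval-valued fuzzy graphs is an interval-valued fuzzy graph. That is, if G1=(A1,B1) and G2=(A2,B2) are interval-valued fuzzy graphs of crisp graphs G1*=(V1,E1) and G2*=(V2,E2), then (A1×A2, B1×B2) is an interval-valued fuzzy graph of the Cartesian product graph G1*×G2*. -/
/-- `(A,B)` is an interval-valued fuzzy graph of the crisp graph `G`. -/
def IsIVFG {V : Type*} (G : SimpleGraph V) (am ap : V → ℝ) (bm bp : V → V → ℝ) : Prop :=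
  (∀ x, 0 ≤ am x ∧ am x ≤ ap x ∧ ap x ≤ 1) ∧
  (∀ x y, G.Adj x y →
    0 ≤ bm x y ∧ bm x y ≤ bp x y ∧
    bm x y ≤ min (am x) (am y) ∧ bp x y ≤ min (ap x) (ap y))

/-! Every edge of `G1 □ G2` lies in a fibre `{x} × G2` or `G1 × {z}`, and on such a fibre the
product is the factor graph with all memberships cut down by the constant interval of `x`
(resp. `z`). Cutting an interval-valued fuzzy graph by a subinterval of `[0,1]` keeps it one,
because `min` is monotone and distributes over itself. -/

theorem min_chain {α : Type*} [LinearOrder α] {l u a b c d : α}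
    (h : l ≤ a ∧ a ≤ b ∧ b ≤ u) (h' : l ≤ c ∧ c ≤ d ∧ d ≤ u) :
    l ≤ min a c ∧ min a c ≤ min b d ∧ min b d ≤ u :=
  ⟨le_min h.1 h'.1, min_le_min h.2.1 h'.2.1, min_le_of_left_le h.2.2⟩

namespace IsIVFG

variable {V : Type*} {G : SimpleGraph V} {am ap : V → ℝ} {bm bp : V → V → ℝ} {c d : ℝ}

theorem const_min (h : IsIVFG G am ap bm bp) (hcd : 0 ≤ c ∧ c ≤ d ∧ d ≤ 1) :
    IsIVFG G (fun x => min c (am x)) (fun x => min d (ap x))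
      (fun x y => min c (bm x y)) (fun x y => min d (bp x y)) := by
  refine ⟨fun x => min_chain hcd (h.1 x), fun x y hxy => ?_⟩
  obtain ⟨hm_nonneg, hmp, hm, hp⟩ := h.2 x y hxy
  refine ⟨le_min hcd.1 hm_nonneg, min_le_min hcd.2.1 hmp, ?_, ?_⟩
  · rw [← inf_inf_distrib_left]
    exact min_le_min_left c hm
  · rw [← inf_inf_distrib_left]
    exact min_le_min_left d hp

theorem min_const (h : IsIVFG G am ap bm bp) (hcd : 0 ≤ c ∧ c ≤ d ∧ d ≤ 1) :
    IsIVFG G (fun x => min (am x) c) (fun x => min (ap x) d)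
      (fun x y => min (bm x y) c) (fun x y => min (bp x y) d) := by
  simpa only [min_comm _ c, min_comm _ d] using h.const_min hcd

end IsIVFG

/-- The Cartesian product of two interval-valued fuzzy graphs is an
interval-valued fuzzy graph of the Cartesian product of the crisp graphs. -/
theorem ivfg_boxProd {V1 V2 : Type*} [DecidableEq V1] [DecidableEq V2]
    (G1 : SimpleGraph V1) (G2 : SimpleGraph V2)
    (am1 ap1 : V1 → ℝ) (bm1 bp1 : V1 → V1 → ℝ)
    (am2 ap2 : V2 → ℝ) (bm2 bp2 : V2 → V2 → ℝ)
    (h1 : IsIVFG G1 am1 ap1 bm1 bp1) (h2 : IsIVFG G2 am2 ap2 bm2 bp2) :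
    IsIVFG (G1 □ G2)
      (fun p => min (am1 p.1) (am2 p.2))
      (fun p => min (ap1 p.1) (ap2 p.2))
      (fun p q => if p.1 = q.1 then min (am1 p.1) (bm2 p.2 q.2)
                  else min (bm1 p.1 q.1) (am2 p.2))
      (fun p q => if p.1 = q.1 then min (ap1 p.1) (bp2 p.2 q.2)
                  else min (bp1 p.1 q.1) (ap2 p.2)) := by
  refine ⟨fun p => min_chain (h1.1 p.1) (h2.1 p.2), ?_⟩
  rintro ⟨x1, x2⟩ ⟨y1, y2⟩ hadj
  rcases SimpleGraph.boxProd_adj.1 hadj with ⟨hadj1, rfl⟩ | ⟨hadj2, rfl⟩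
  · simpa only [if_neg (G1.ne_of_adj hadj1)] using (h1.min_const (h2.1 x2)).2 x1 y1 hadj1
  · simpa only [if_true] using (h2.const_min (h1.1 x1)).2 x2 y2 hadj2
end

section
/- The composition G1[G2] of two interval-valued fuzzy graphs G1 and G2 of crisp graphs G1* and G2* is an interval-valued fuzzy graph of the composition graph G1*[G2*]. -/
/-- The composition `G1*[G2*]` of crisp graphs: `(x1,x2)(y1,y2)` is an edge iff
either `x1 = y1` and `x2 y2 ∈ E2`, or `x1 y1 ∈ E1`. -/
def compGraph {V1 V2 : Type*} (G1 : SimpleGraph V1) (G2 : SimpleGraph V2) :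
    SimpleGraph (V1 × V2) where
  Adj p q := (p.1 = q.1 ∧ G2.Adj p.2 q.2) ∨ G1.Adj p.1 q.1
  symm := by
    constructor
    rintro p q (⟨h1, h2⟩ | h)
    · exact Or.inl ⟨h1.symm, h2.symm⟩
    · exact Or.inr h.symm
  loopless := by
    constructor
    rintro p (⟨_, h⟩ | h)
    · exact G2.loopless.irrefl _ h
    · exact G1.loopless.irrefl _ h

/-!
Every composed membership is a minimum of memberships of the two factors. Since `min` is
monotone, the interval conditions `0 ≤ μ⁻ ≤ μ⁺` pass to the composition; and on each of the
three kinds of edges of `G1*[G2*]` the edge bound of one factor, combined with the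
distributivity of `min` over itself, bounds the composed edge membership by the composed
memberships of its endpoints.
-/

namespace compGraph

variable {V1 V2 α : Type*} [LinearOrder α]

def vertexMem (a1 : V1 → α) (a2 : V2 → α) (p : V1 × V2) : α :=
  min (a1 p.1) (a2 p.2)

variable [DecidableEq V1] [DecidableEq V2] {G1 : SimpleGraph V1} {G2 : SimpleGraph V2}

/-- The membership `μ_{B1} ∘ μ_{B2}` of the composition; its values off the edges of
`compGraph G1 G2` are irrelevant. -/
def edgeMem (a1 : V1 → α) (a2 : V2 → α) (b1 : V1 → V1 → α) (b2 : V2 → V2 → α)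
    (p q : V1 × V2) : α :=
  if p.1 = q.1 then min (a1 p.1) (b2 p.2 q.2)
  else if p.2 = q.2 then min (b1 p.1 q.1) (a2 p.2)
  else min (min (a2 p.2) (a2 q.2)) (b1 p.1 q.1)

theorem edgeMem_mono {a1 a1' : V1 → α} {a2 a2' : V2 → α} {b1 b1' : V1 → V1 → α}
    {b2 b2' : V2 → V2 → α} (ha1 : a1 ≤ a1') (ha2 : a2 ≤ a2')
    (hb1 : ∀ x y, G1.Adj x y → b1 x y ≤ b1' x y) (hb2 : ∀ x y, G2.Adj x y → b2 x y ≤ b2' x y)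
    {p q : V1 × V2} (h : (compGraph G1 G2).Adj p q) :
    edgeMem a1 a2 b1 b2 p q ≤ edgeMem a1' a2' b1' b2' p q := by
  unfold edgeMem
  rcases h with ⟨h1, h2⟩ | h1
  · rw [if_pos h1, if_pos h1]
    exact min_le_min (ha1 _) (hb2 _ _ h2)
  · rw [if_neg h1.ne, if_neg h1.ne]
    split_ifs
    · exact min_le_min (hb1 _ _ h1) (ha2 _)
    · exact min_le_min (min_le_min (ha2 _) (ha2 _)) (hb1 _ _ h1)

theorem edgeMem_le_min_vertexMem {a1 : V1 → α} {a2 : V2 → α} {b1 : V1 → V1 → α}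
    {b2 : V2 → V2 → α} (h1 : ∀ x y, G1.Adj x y → b1 x y ≤ min (a1 x) (a1 y))
    (h2 : ∀ x y, G2.Adj x y → b2 x y ≤ min (a2 x) (a2 y))
    {p q : V1 × V2} (h : (compGraph G1 G2).Adj p q) :
    edgeMem a1 a2 b1 b2 p q ≤ min (vertexMem a1 a2 p) (vertexMem a1 a2 q) := by
  obtain ⟨x1, x2⟩ := p
  obtain ⟨y1, y2⟩ := q
  unfold edgeMem vertexMem
  rcases h with ⟨rfl, h⟩ | h
  · rw [if_pos rfl]
    calc min (a1 x1) (b2 x2 y2) ≤ min (a1 x1) (min (a2 x2) (a2 y2)) :=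
          min_le_min_left _ (h2 _ _ h)
      _ = min (min (a1 x1) (a2 x2)) (min (a1 x1) (a2 y2)) := inf_inf_distrib_left _ _ _
  · rw [if_neg h.ne]
    split_ifs with hx
    · subst hx
      calc min (b1 x1 y1) (a2 x2) ≤ min (min (a1 x1) (a1 y1)) (a2 x2) :=
            min_le_min_right _ (h1 _ _ h)
        _ = min (min (a1 x1) (a2 x2)) (min (a1 y1) (a2 x2)) := inf_inf_distrib_right _ _ _
    · calc min (min (a2 x2) (a2 y2)) (b1 x1 y1)
            ≤ min (min (a2 x2) (a2 y2)) (min (a1 x1) (a1 y1)) := min_le_min_left _ (h1 _ _ h)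
        _ = min (min (a1 x1) (a2 x2)) (min (a1 y1) (a2 y2)) := by ac_rfl

end compGraph

/-- The composition of two interval-valued fuzzy graphs is an
interval-valued fuzzy graph of the composition of the crisp graphs. -/
theorem ivfg_comp {V1 V2 : Type*} [DecidableEq V1] [DecidableEq V2]
    (G1 : SimpleGraph V1) (G2 : SimpleGraph V2)
    (am1 ap1 : V1 → ℝ) (bm1 bp1 : V1 → V1 → ℝ)
    (am2 ap2 : V2 → ℝ) (bm2 bp2 : V2 → V2 → ℝ)
    (h1 : IsIVFG G1 am1 ap1 bm1 bp1) (h2 : IsIVFG G2 am2 ap2 bm2 bp2) :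
    IsIVFG (compGraph G1 G2)
      (fun p => min (am1 p.1) (am2 p.2))
      (fun p => min (ap1 p.1) (ap2 p.2))
      (fun p q => if p.1 = q.1 then min (am1 p.1) (bm2 p.2 q.2)
                  else if p.2 = q.2 then min (bm1 p.1 q.1) (am2 p.2)
                  else min (min (am2 p.2) (am2 q.2)) (bm1 p.1 q.1))
      (fun p q => if p.1 = q.1 then min (ap1 p.1) (bp2 p.2 q.2)
                  else if p.2 = q.2 then min (bp1 p.1 q.1) (ap2 p.2)
                  else min (min (ap2 p.2) (ap2 q.2)) (bp1 p.1 q.1)) := by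
  obtain ⟨hv1, he1⟩ := h1
  obtain ⟨hv2, he2⟩ := h2
  refine ⟨fun p => ⟨le_min (hv1 p.1).1 (hv2 p.2).1,
    min_le_min (hv1 p.1).2.1 (hv2 p.2).2.1, min_le_of_left_le (hv1 p.1).2.2⟩,
    fun p q h => ⟨?_, ?_, ?_, ?_⟩⟩
  · -- monotonicity from the all-zero data, whose composed edge membership is zero
    simpa [compGraph.edgeMem] using
      compGraph.edgeMem_mono (a1 := 0) (a2 := 0) (b1 := 0) (b2 := 0)
      (fun x => (hv1 x).1) (fun x => (hv2 x).1) (fun x y h => (he1 x y h).1)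
      (fun x y h => (he2 x y h).1) h
  · exact compGraph.edgeMem_mono (fun x => (hv1 x).2.1) (fun x => (hv2 x).2.1)
      (fun x y h => (he1 x y h).2.1) (fun x y h => (he2 x y h).2.1) h
  · exact compGraph.edgeMem_le_min_vertexMem (fun x y h => (he1 x y h).2.2.1)
      (fun x y h => (he2 x y h).2.2.1) h
  · exact compGraph.edgeMem_le_min_vertexMem (fun x y h => (he1 x y h).2.2.2)
      (fun x y h => (he2 x y h).2.2.2) h
end

section
/- If G=(A,B) is an interval-valued fuzzy complete graph, then its composition with itself G[G] is an interval-valued fuzzy complete graph. -/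
namespace IntervalFuzzyGraph

variable {V α : Type*} [LinearOrder α]

/-- The lower bounds `μ⁻_A, μ⁻_B` and upper bounds `μ⁺_A, μ⁺_B` of an interval-valued fuzzy graph
are treated separately, as pairs `a, b`. -/
def IsComplete (a : V → α) (b : V → V → α) : Prop :=
  ∀ x y, x ≠ y → b x y = min (a x) (a y)

/-- The edge membership of `G[G]` for one bound; the crisp graph is complete, so every pair of
distinct vertices is an edge. -/
def compEdge [DecidableEq V] (a : V → α) (b : V → V → α) (p q : V × V) : α :=
  if p.1 = q.1 then min (a p.1) (b p.2 q.2)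
  else if p.2 = q.2 then min (b p.1 q.1) (a p.2)
  else min (min (a p.2) (a q.2)) (b p.1 q.1)

theorem compEdge_of_isComplete [DecidableEq V] {a : V → α} {b : V → V → α}
    (hb : IsComplete a b) {p q : V × V} (hpq : p ≠ q) :
    compEdge a b p q = min (min (a p.1) (a p.2)) (min (a q.1) (a q.2)) := by
  obtain ⟨x1, x2⟩ := p
  obtain ⟨y1, y2⟩ := q
  unfold compEdge
  dsimp only
  by_cases h1 : x1 = y1
  · subst h1
    have h2 : x2 ≠ y2 := fun h => hpq (by rw [h])
    rw [if_pos rfl, hb x2 y2 h2]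
    exact inf_inf_distrib_left _ _ _
  · rw [if_neg h1, hb x1 y1 h1]
    by_cases h2 : x2 = y2
    · subst h2
      rw [if_pos rfl]
      exact inf_inf_distrib_right _ _ _
    · rw [if_neg h2]
      ac_rfl

end IntervalFuzzyGraph

open IntervalFuzzyGraph in
theorem ivfg_complete_comp_general {V : Type*} [DecidableEq V]
    (am ap : V → ℝ) (bm bp : V → V → ℝ)
    (hcomplete : ∀ x y : V, x ≠ y →
      bm x y = min (am x) (am y) ∧ bp x y = min (ap x) (ap y)) :
    ∀ p q : V × V, p ≠ q →
      ((if p.1 = q.1 then min (am p.1) (bm p.2 q.2)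
        else if p.2 = q.2 then min (bm p.1 q.1) (am p.2)
        else min (min (am p.2) (am q.2)) (bm p.1 q.1))
          = min (min (am p.1) (am p.2)) (min (am q.1) (am q.2))) ∧
      ((if p.1 = q.1 then min (ap p.1) (bp p.2 q.2)
        else if p.2 = q.2 then min (bp p.1 q.1) (ap p.2)
        else min (min (ap p.2) (ap q.2)) (bp p.1 q.1))
          = min (min (ap p.1) (ap p.2)) (min (ap q.1) (ap q.2))) := fun _ _ hpq =>
  ⟨compEdge_of_isComplete (fun x y hxy => (hcomplete x y hxy).1) hpq,
    compEdge_of_isComplete (fun x y hxy => (hcomplete x y hxy).2) hpq⟩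

/-- If `G = (A,B)` is an interval-valued fuzzy complete graph (on the complete crisp
graph, so every pair of distinct vertices is an edge), then the composition `G[G]`
is again an interval-valued fuzzy complete graph: the edge membership of `G[G]` on
every pair of distinct vertices of `V × V` is the `min` of the endpoint vertex
memberships. -/
theorem ivfg_complete_comp {V : Type*} [DecidableEq V]
    (am ap : V → ℝ) (bm bp : V → V → ℝ)
    (hv : ∀ x, 0 ≤ am x ∧ am x ≤ ap x ∧ ap x ≤ 1)
    (hcomplete : ∀ x y : V, x ≠ y →
      bm x y = min (am x) (am y) ∧ bp x y = min (ap x) (ap y)) :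
    ∀ p q : V × V, p ≠ q →
      ((if p.1 = q.1 then min (am p.1) (bm p.2 q.2)
        else if p.2 = q.2 then min (bm p.1 q.1) (am p.2)
        else min (min (am p.2) (am q.2)) (bm p.1 q.1))
          = min (min (am p.1) (am p.2)) (min (am q.1) (am q.2))) ∧
      ((if p.1 = q.1 then min (ap p.1) (bp p.2 q.2)
        else if p.2 = q.2 then min (bp p.1 q.1) (ap p.2)
        else min (min (ap p.2) (ap q.2)) (bp p.1 q.1))
          = min (min (ap p.1) (ap p.2)) (min (ap q.1) (ap q.2))) :=
  ivfg_complete_comp_general am ap bm bp hcomplete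
end
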